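/- There is a bijection between Schröder paths of length m that (1) touch the main diagonal only at (0,0) and (m,m), (2) begin with steps n then d, and (3) have no outer corners, and Dyck paths of length m-1. The bijection replaces each diagonal step by an east step followed by a north step, and then removes the forced initial three steps (north, east, north), up to the appropriate normalization. -/
import Mathlib


open scoped Classical

noncomputable section

/-- A lattice-path step: north `(0,1)`, east `(1,0)`, or diagonal `(1,1)`. -/
inductive Step : Type
  | n : Step
  | e : Step
  | d : Step
deriving DecidableEq

/-- The endpoint of the lattice path given by a list of steps, starting at `(0,0)`. -/
def pathPos (P : List Step) : ℕ × ℕ :=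
  (P.count Step.e + P.count Step.d, P.count Step.n + P.count Step.d)

/-- `P` is a Schröder path of length `m`: it runs from `(0,0)` to `(m,m)`, never
falls below the main diagonal, and has no diagonal step starting on the diagonal. -/
def IsSchroder (m : ℕ) (P : List Step) : Prop :=
  pathPos P = (m, m) ∧
  (∀ k : ℕ, (pathPos (P.take k)).1 ≤ (pathPos (P.take k)).2) ∧
  (∀ k : ℕ, P[k]? = some Step.d → (pathPos (P.take k)).1 < (pathPos (P.take k)).2)

/-- `P` has a diagonal step in the box `(i,j)` (the unit box with top-right
vertex `(i,j)`), i.e. some prefix of `P` ends at `(i-1, j-1)` and is followed by a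
diagonal step. -/
def HasDiag (P : List Step) (i j : ℕ) : Prop :=
  ∃ k : ℕ, P[k]? = some Step.d ∧ pathPos (P.take k) = (i - 1, j - 1)

/-- The box `(i,j)` lies (strictly) under the path `P`: some prefix of `P` ends at a
point with abscissa `i-1` and ordinate at least `j`. -/
def UnderPath (P : List Step) (i j : ℕ) : Prop :=
  ∃ k : ℕ, (pathPos (P.take k)).1 = i - 1 ∧ j ≤ (pathPos (P.take k)).2

/-- Replace every diagonal step by an east step followed by a north step. -/
def expandDiag (P : List Step) : List Step :=
  P.flatMap fun s => match s with
    | Step.d => [Step.e, Step.n]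
    | s => [s]

/-- `P` touches the main diagonal only at its endpoints. -/
def ConnectedPath (P : List Step) : Prop :=
  ∀ k : ℕ, 0 < k → k < P.length →
    (pathPos (P.take k)).1 ≠ (pathPos (P.take k)).2

/-- `P` has no outer corner, i.e. no east step immediately followed by a north step. -/
def NoOuterCorner (P : List Step) : Prop :=
  ¬ ∃ k : ℕ, P[k]? = some Step.e ∧ P[k + 1]? = some Step.n

/-! ### Auxiliary machinery -/

/-- Contract every east step immediately followed by a north step into a diagonal
step; this is the inverse of `expandDiag` on paths without outer corners. -/
def contract : List Step → List Step
  | Step.e :: Step.n :: rest => Step.d :: contract rest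
  | s :: rest => s :: contract rest
  | [] => []

lemma pathPos_nil : pathPos [] = (0, 0) := rfl

lemma pathPos_cons_n (L : List Step) :
    pathPos (Step.n :: L) = ((pathPos L).1, (pathPos L).2 + 1) := by
  simp [pathPos, List.count_cons]; omega

lemma pathPos_cons_e (L : List Step) :
    pathPos (Step.e :: L) = ((pathPos L).1 + 1, (pathPos L).2) := by
  simp [pathPos, List.count_cons]; omega

lemma pathPos_cons_d (L : List Step) :
    pathPos (Step.d :: L) = ((pathPos L).1 + 1, (pathPos L).2 + 1) := by
  simp [pathPos, List.count_cons]; omega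

lemma count_e_expand (Q : List Step) :
    (expandDiag Q).count Step.e = Q.count Step.e + Q.count Step.d := by
  induction Q with
  | nil => rfl
  | cons s Q ih => cases s <;> simp [expandDiag, List.count_cons] at * <;> omega

lemma count_n_expand (Q : List Step) :
    (expandDiag Q).count Step.n = Q.count Step.n + Q.count Step.d := by
  induction Q with
  | nil => rfl
  | cons s Q ih => cases s <;> simp [expandDiag, List.count_cons] at * <;> omega

lemma not_d_mem_expand (Q : List Step) : Step.d ∉ expandDiag Q := by
  induction Q with
  | nil => simp [expandDiag]
  | cons s Q ih => cases s <;> simp [expandDiag] at * <;> tauto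

lemma pathPos_expand (Q : List Step) : pathPos (expandDiag Q) = pathPos Q := by
  simp [pathPos, count_e_expand, count_n_expand,
    List.count_eq_zero.mpr (not_d_mem_expand Q)]

lemma expand_contract (L : List Step) (hd : Step.d ∉ L) : expandDiag (contract L) = L := by
  induction L using contract.induct with
  | case1 r ih => simp [contract, expandDiag] at *; exact ih hd
  | case2 s r h ih =>
      have hr : Step.d ∉ r := by simp at hd; tauto
      cases s
      · rw [show contract (Step.n :: r) = Step.n :: contract r from rfl]
        simp [expandDiag] at *; exact ih hr
      · rw [show contract (Step.e :: r) = Step.e :: contract r from ?_]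
        · simp [expandDiag] at *; exact ih hr
        · cases r with
          | nil => rfl
          | cons t r' => cases t <;> first | rfl | (exact absurd rfl fun hh => h r' hh rfl)
      · simp at hd
  | case3 => rfl

lemma noc_cons (s : Step) (L : List Step) :
    NoOuterCorner (s :: L) ↔ (s = Step.e → L[0]? ≠ some Step.n) ∧ NoOuterCorner L := by
  constructor
  · intro h
    refine ⟨?_, ?_⟩
    · rintro rfl hn; exact h ⟨0, by simp, by simpa using hn⟩
    · rintro ⟨k, h1, h2⟩; exact h ⟨k + 1, by simpa using h1, by simpa using h2⟩
  · rintro ⟨h0, h1⟩ ⟨k, hk1, hk2⟩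
    cases k with
    | zero =>
        simp at hk1; subst hk1
        exact h0 rfl (by simpa using hk2)
    | succ k => exact h1 ⟨k, by simpa using hk1, by simpa using hk2⟩

lemma contract_expand (Q : List Step) (h : NoOuterCorner Q) : contract (expandDiag Q) = Q := by
  induction Q with
  | nil => rfl
  | cons s Q ih =>
      rw [noc_cons] at h
      obtain ⟨h0, h1⟩ := h
      cases s
      · rw [show expandDiag (Step.n :: Q) = Step.n :: expandDiag Q from rfl,
          show contract (Step.n :: expandDiag Q) = Step.n :: contract (expandDiag Q) from rfl,
          ih h1]
      · rw [show expandDiag (Step.e :: Q) = Step.e :: expandDiag Q from rfl]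
        have key : contract (Step.e :: expandDiag Q) = Step.e :: contract (expandDiag Q) := by
          cases hq : expandDiag Q with
          | nil => rfl
          | cons t r =>
              cases t
              · exfalso
                cases Q with
                | nil => simp [expandDiag] at hq
                | cons u Q' =>
                    cases u <;> simp [expandDiag] at hq
                    exact h0 rfl (by simp)
              · rfl
              · rfl
        rw [key, ih h1]
      · rw [show expandDiag (Step.d :: Q) = Step.e :: Step.n :: expandDiag Q from rfl,
          show contract (Step.e :: Step.n :: expandDiag Q) = Step.d :: contract (expandDiag Q)
            from rfl, ih h1]

lemma contract_head (L : List Step) (h : L[0]? ≠ some Step.n) :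
    (contract L)[0]? ≠ some Step.n := by
  cases L with
  | nil => simpa [contract] using h
  | cons s r =>
      cases s
      · simp at h
      · cases r with
        | nil => simp [contract]
        | cons t r' => cases t <;> simp [contract]
      · simp [contract]

lemma contract_noc (L : List Step) : NoOuterCorner (contract L) := by
  induction L using contract.induct with
  | case1 rest ih =>
      rw [show contract (Step.e :: Step.n :: rest) = Step.d :: contract rest from rfl, noc_cons]
      exact ⟨by simp, ih⟩
  | case2 s rest hguard ih =>
      cases s
      · rw [show contract (Step.n :: rest) = Step.n :: contract rest from rfl, noc_cons]
        exact ⟨by simp, ih⟩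
      · have hcon : contract (Step.e :: rest) = Step.e :: contract rest := by
          cases rest with
          | nil => rfl
          | cons t r' => cases t <;> first | rfl | (exact absurd rfl fun hh => hguard r' hh rfl)
        rw [hcon, noc_cons]
        refine ⟨fun _ => contract_head rest ?_, ih⟩
        cases rest with
        | nil => simp
        | cons t r' =>
            cases t
            · exact absurd rfl fun hh => hguard r' hh rfl
            · simp
            · simp
      · rw [show contract (Step.d :: rest) = Step.d :: contract rest from rfl, noc_cons]
        exact ⟨by simp, ih⟩
  | case3 => rintro ⟨k, hk, -⟩; simp [contract] at hk

lemma expand_bound (Q : List Step) (c : ℕ)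
    (h1 : ∀ k, (pathPos (Q.take k)).1 ≤ (pathPos (Q.take k)).2 + c)
    (h2 : ∀ k, Q[k]? = some Step.d →
      (pathPos (Q.take k)).1 + 1 ≤ (pathPos (Q.take k)).2 + c) :
    ∀ j, (pathPos ((expandDiag Q).take j)).1 ≤ (pathPos ((expandDiag Q).take j)).2 + c := by
  induction Q generalizing c with
  | nil => intro j; simp [expandDiag, pathPos]
  | cons s Q ih =>
    cases s with
    | n =>
      have h1' : ∀ k, (pathPos (Q.take k)).1 ≤ (pathPos (Q.take k)).2 + (c + 1) := by
        intro k
        have := h1 (k + 1)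
        simp [pathPos_cons_n] at this
        omega
      have h2' : ∀ k, Q[k]? = some Step.d →
          (pathPos (Q.take k)).1 + 1 ≤ (pathPos (Q.take k)).2 + (c + 1) := by
        intro k hk
        have := h2 (k + 1) (by simpa using hk)
        simp [pathPos_cons_n] at this
        omega
      intro j
      cases j with
      | zero => simp [pathPos]
      | succ j =>
        rw [show expandDiag (Step.n :: Q) = Step.n :: expandDiag Q from rfl]
        have := ih (c + 1) h1' h2' j
        simp [pathPos_cons_n]
        omega
    | e =>
      have hc : 1 ≤ c := by
        have := h1 1
        simpa [pathPos_cons_e, pathPos_nil] using this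
      have h1' : ∀ k, (pathPos (Q.take k)).1 ≤ (pathPos (Q.take k)).2 + (c - 1) := by
        intro k
        have := h1 (k + 1)
        simp [pathPos_cons_e] at this
        omega
      have h2' : ∀ k, Q[k]? = some Step.d →
          (pathPos (Q.take k)).1 + 1 ≤ (pathPos (Q.take k)).2 + (c - 1) := by
        intro k hk
        have := h2 (k + 1) (by simpa using hk)
        simp [pathPos_cons_e] at this
        omega
      intro j
      cases j with
      | zero => simp [pathPos]
      | succ j =>
        rw [show expandDiag (Step.e :: Q) = Step.e :: expandDiag Q from rfl]
        have := ih (c - 1) h1' h2' j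
        simp [pathPos_cons_e]
        omega
    | d =>
      have hc : 1 ≤ c := by
        have := h2 0 (by simp)
        simpa [pathPos] using this
      have h1' : ∀ k, (pathPos (Q.take k)).1 ≤ (pathPos (Q.take k)).2 + c := by
        intro k
        have := h1 (k + 1)
        simp [pathPos_cons_d] at this
        omega
      have h2' : ∀ k, Q[k]? = some Step.d →
          (pathPos (Q.take k)).1 + 1 ≤ (pathPos (Q.take k)).2 + c := by
        intro k hk
        have := h2 (k + 1) (by simpa using hk)
        simp [pathPos_cons_d] at this
        omega
      intro j
      match j with
      | 0 => simp [pathPos]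
      | 1 =>
        rw [show expandDiag (Step.d :: Q) = Step.e :: Step.n :: expandDiag Q from rfl]
        simpa [pathPos_cons_e, pathPos_nil] using hc
      | (j + 2) =>
        rw [show expandDiag (Step.d :: Q) = Step.e :: Step.n :: expandDiag Q from rfl]
        have := ih c h1' h2' j
        simp [pathPos_cons_e, pathPos_cons_n]
        omega

lemma contract_interior : ∀ (L : List Step), ∀ (c : ℕ), Step.d ∉ L →
    (∀ j, (pathPos (L.take j)).1 ≤ (pathPos (L.take j)).2 + c) →
    ∀ k, k < (contract L).length →
      (pathPos ((contract L).take k)).1 ≤ (pathPos ((contract L).take k)).2 + (c - 1) := by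
  intro L
  induction L using contract.induct with
  | case1 rest ih =>
    intro c hd h k hk
    have hc : 1 ≤ c := by
      have := h 1
      simpa [pathPos_cons_e, pathPos_nil] using this
    have hd' : Step.d ∉ rest := by simp at hd; tauto
    have h' : ∀ j, (pathPos (rest.take j)).1 ≤ (pathPos (rest.take j)).2 + c := by
      intro j
      have := h (j + 2)
      simp [pathPos_cons_e, pathPos_cons_n] at this
      omega
    rw [show contract (Step.e :: Step.n :: rest) = Step.d :: contract rest from rfl] at hk ⊢
    cases k with
    | zero => simp [pathPos]
    | succ k =>
      have := ih c hd' h' k (by simpa using hk)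
      simp [pathPos_cons_d]
      omega
  | case2 s rest hguard ih =>
    intro c hd h k hk
    cases s with
    | d => simp at hd
    | n =>
      have hd' : Step.d ∉ rest := by simp at hd; tauto
      have h' : ∀ j, (pathPos (rest.take j)).1 ≤ (pathPos (rest.take j)).2 + (c + 1) := by
        intro j
        have := h (j + 1)
        simp [pathPos_cons_n] at this
        omega
      rw [show contract (Step.n :: rest) = Step.n :: contract rest from rfl] at hk ⊢
      cases k with
      | zero => simp [pathPos]
      | succ k =>
        have := ih (c + 1) hd' h' k (by simpa using hk)
        simp [pathPos_cons_n]
        omega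
    | e =>
      have hc : 1 ≤ c := by
        have := h 1
        simpa [pathPos_cons_e, pathPos_nil] using this
      have hd' : Step.d ∉ rest := by simp at hd; tauto
      have h' : ∀ j, (pathPos (rest.take j)).1 ≤ (pathPos (rest.take j)).2 + (c - 1) := by
        intro j
        have := h (j + 1)
        simp [pathPos_cons_e] at this
        omega
      have hcon : contract (Step.e :: rest) = Step.e :: contract rest := by
        cases rest with
        | nil => rfl
        | cons t r' => cases t <;> first | rfl | (exact absurd rfl fun hh => hguard r' hh rfl)
      rw [hcon] at hk ⊢
      cases k with
      | zero => simp [pathPos]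
      | succ k =>
        rcases Nat.lt_or_ge c 2 with hc2 | hc2
        · exfalso
          interval_cases c
          cases rest with
          | nil => simp [contract] at hk
          | cons t r' =>
            cases t with
            | n => exact hguard r' rfl rfl
            | d => simp at hd
            | e =>
              have := h 2
              simp [pathPos_cons_e, pathPos_nil] at this
        · have := ih (c - 1) hd' h' k (by simpa using hk)
          simp [pathPos_cons_e]
          omega
  | case3 =>
    intro c hd h k hk
    simp [contract] at hk


/-- The bijection between Schröder paths of length `m` that (1) touch the main
diagonal only at `(0,0)` and `(m,m)`, (2) begin with the steps `n` then `d`, and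
(3) have no outer corners, and Dyck paths of length `m-1`: replace every diagonal
step by an east step followed by a north step (which forces the initial three steps
`n, e, n`), remove those three steps and prepend a single north step. -/
theorem schroder_dyck_bijection (m : ℕ) (hm : 2 ≤ m) :
    Set.BijOn (fun P => Step.n :: (expandDiag P).drop 3)
      {P : List Step | IsSchroder m P ∧ ConnectedPath P ∧
        P.take 2 = [Step.n, Step.d] ∧ NoOuterCorner P}
      {D : List Step | IsSchroder (m - 1) D ∧ Step.d ∉ D} := by
  refine ⟨?_, ?_, ?_⟩
  · -- MapsTo
    rintro P ⟨⟨hpos, hw, hdd⟩, hC, ht, hN⟩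
    obtain ⟨Q, rfl⟩ : ∃ Q, P = Step.n :: Step.d :: Q := by
      refine ⟨P.drop 2, ?_⟩
      have h := List.take_append_drop 2 P
      rw [ht] at h
      exact h.symm
    have hfP : (fun P => Step.n :: (expandDiag P).drop 3) (Step.n :: Step.d :: Q)
        = Step.n :: expandDiag Q := by
      simp only
      rw [show expandDiag (Step.n :: Step.d :: Q)
        = Step.n :: Step.e :: Step.n :: expandDiag Q from rfl]
      rfl
    rw [hfP]
    have hQpos : (pathPos Q).1 + 1 = m ∧ (pathPos Q).2 + 2 = m := by
      rw [pathPos_cons_n, pathPos_cons_d, Prod.mk.injEq] at hpos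
      omega
    have h1 : ∀ k, (pathPos (Q.take k)).1 ≤ (pathPos (Q.take k)).2 + 1 := by
      intro k
      have := hw (k + 2)
      simp [pathPos_cons_n, pathPos_cons_d] at this
      omega
    have h2 : ∀ k, Q[k]? = some Step.d →
        (pathPos (Q.take k)).1 + 1 ≤ (pathPos (Q.take k)).2 + 1 := by
      intro k hk
      have := hdd (k + 2) (by simpa using hk)
      simp [pathPos_cons_n, pathPos_cons_d] at this
      omega
    have hbound := expand_bound Q 1 h1 h2
    refine ⟨⟨?_, ?_, ?_⟩, ?_⟩
    · rw [pathPos_cons_n, pathPos_expand, Prod.mk.injEq]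
      omega
    · intro k
      cases k with
      | zero => simp [pathPos]
      | succ k =>
        rw [List.take_succ_cons, pathPos_cons_n]
        have := hbound k
        simp
        omega
    · intro k hk
      exfalso
      have : Step.d ∈ Step.n :: expandDiag Q := List.mem_of_getElem? hk
      simp at this
      exact not_d_mem_expand Q this
    · intro hmem
      simp at hmem
      exact not_d_mem_expand Q hmem
  · -- InjOn
    rintro P1 ⟨-, -, ht1, hN1⟩ P2 ⟨-, -, ht2, hN2⟩ heq
    obtain ⟨Q1, rfl⟩ : ∃ Q, P1 = Step.n :: Step.d :: Q := by
      refine ⟨P1.drop 2, ?_⟩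
      have h := List.take_append_drop 2 P1
      rw [ht1] at h
      exact h.symm
    obtain ⟨Q2, rfl⟩ : ∃ Q, P2 = Step.n :: Step.d :: Q := by
      refine ⟨P2.drop 2, ?_⟩
      have h := List.take_append_drop 2 P2
      rw [ht2] at h
      exact h.symm
    have hQ1 : NoOuterCorner Q1 := ((noc_cons _ _).mp (((noc_cons _ _).mp hN1).2)).2
    have hQ2 : NoOuterCorner Q2 := ((noc_cons _ _).mp (((noc_cons _ _).mp hN2).2)).2
    have hE : expandDiag Q1 = expandDiag Q2 := by
      have h1 : (fun P => Step.n :: (expandDiag P).drop 3) (Step.n :: Step.d :: Q1)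
          = Step.n :: expandDiag Q1 := by
        simp only
        rw [show expandDiag (Step.n :: Step.d :: Q1)
          = Step.n :: Step.e :: Step.n :: expandDiag Q1 from rfl]
        rfl
      have h2 : (fun P => Step.n :: (expandDiag P).drop 3) (Step.n :: Step.d :: Q2)
          = Step.n :: expandDiag Q2 := by
        simp only
        rw [show expandDiag (Step.n :: Step.d :: Q2)
          = Step.n :: Step.e :: Step.n :: expandDiag Q2 from rfl]
        rfl
      rw [h1, h2] at heq
      exact List.cons_injective.eq_iff.mp heq
    have : Q1 = Q2 := by
      rw [← contract_expand Q1 hQ1, ← contract_expand Q2 hQ2, hE]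
    rw [this]
  · -- SurjOn
    rintro D ⟨⟨hpos, hw, -⟩, hdD⟩
    obtain ⟨L, rfl⟩ : ∃ L, D = Step.n :: L := by
      cases D with
      | nil =>
          exfalso
          rw [show pathPos ([] : List Step) = (0, 0) from rfl, Prod.mk.injEq] at hpos
          omega
      | cons s L =>
          cases s
          · exact ⟨L, rfl⟩
          · exfalso
            have := hw 1
            simp [pathPos_cons_e, pathPos_nil] at this
          · exfalso
            exact hdD (by simp)
    have hdL : Step.d ∉ L := fun h => hdD (by simp [h])
    have hLpos : (pathPos L).1 = m - 1 ∧ (pathPos L).2 + 1 = m - 1 := by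
      rw [pathPos_cons_n, Prod.mk.injEq] at hpos
      omega
    have hL : ∀ j, (pathPos (L.take j)).1 ≤ (pathPos (L.take j)).2 + 1 := by
      intro j
      have := hw (j + 1)
      simp [pathPos_cons_n] at this
      omega
    have hint := contract_interior L 1 hdL hL
    set Q := contract L with hQdef
    have hEQ : expandDiag Q = L := expand_contract L hdL
    have hQpos : pathPos Q = pathPos L := by rw [← hEQ, pathPos_expand]
    refine ⟨Step.n :: Step.d :: Q, ⟨⟨?_, ?_, ?_⟩, ?_, rfl, ?_⟩, ?_⟩
    · rw [pathPos_cons_n, pathPos_cons_d, hQpos, Prod.mk.injEq]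
      omega
    · intro k
      match k with
      | 0 => simp [pathPos]
      | 1 => simp [pathPos_cons_n, pathPos_nil]
      | (j + 2) =>
        rw [List.take_succ_cons, List.take_succ_cons, pathPos_cons_n, pathPos_cons_d]
        simp only
        rcases Nat.lt_or_ge j Q.length with hj | hj
        · have := hint j hj
          omega
        · rw [List.take_of_length_le hj, hQpos]
          omega
    · intro k hk
      match k, hk with
      | 0, hk => simp at hk
      | 1, hk => simp [pathPos_cons_n, pathPos_nil]
      | (j + 2), hk =>
        have hkQ : Q[j]? = some Step.d := by simpa using hk
        have hj : j < Q.length := (List.getElem?_eq_some_iff.mp hkQ).1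
        have := hint j hj
        rw [List.take_succ_cons, List.take_succ_cons, pathPos_cons_n, pathPos_cons_d]
        simp only
        omega
    · intro k hk0 hklen
      match k, hk0 with
      | 1, _ => simp [pathPos_cons_n, pathPos_nil]
      | (j + 2), _ =>
        have hj : j < Q.length := by simpa using hklen
        have := hint j hj
        rw [List.take_succ_cons, List.take_succ_cons, pathPos_cons_n, pathPos_cons_d]
        simp only
        omega
    · rw [noc_cons, noc_cons]
      exact ⟨by simp, by simp, contract_noc L⟩
    · simp only
      rw [show expandDiag (Step.n :: Step.d :: Q)
        = Step.n :: Step.e :: Step.n :: expandDiag Q from rfl]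
      rw [show (Step.n :: Step.e :: Step.n :: expandDiag Q).drop 3 = expandDiag Q from rfl, hEQ]
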